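/- Let P be a projection algebra and let T be the quotient of the free semigroup on X_P = {x_p : p ∈ P} by the congruence ∼ generated by the relations x_p² = x_p, (x_p x_q)² = x_p x_q, x_p x_q x_p = x_{qθ_p} (p, q ∈ P). Let S be any regular *-semigroup with projection set P(S), and let φ : P → P(S) be a map satisfying φ(qθ_p) = φ(p)φ(q)φ(p) for all p, q ∈ P (a projection algebra morphism). Then there exists a unique semigroup homomorphism Φ : T → S with Φ([x_p]) = φ(p) for all p ∈ P; moreover Φ respects the involutions, in the sense that Φ([x_{p_k}⋯x_{p₁}]) = (Φ([x_{p₁}⋯x_{p_k}]))* for every word x_{p₁}⋯x_{p_k}. -/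

import Mathlib

/-! The three defining relations of `T` hold among projections of a regular *-semigroup:
idempotence is part of being a projection, `(ef)² = ef` is regularity `a a* a = a` applied to
`a = ef` (whose adjoint is `fe`), and `x_p x_q x_p = x_{qθ_p}` is the morphism property of `φ`.
Hence the lift of `φ` to the free semigroup factors through `T`, uniquely since `T` is
generated by the `[x_p]`. Reversing a word of self-adjoint generators is the involution, as
`(ab)* = b* a*`. -/

structure ProjectionAlgebra (P : Type*) where
  th : P → P → P
  P1 : ∀ p, th p p = p
  P2 : ∀ p q, th p (th p q) = th p q
  P3 : ∀ p q, th p (th q p) = th p q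
  P4 : ∀ p q r, th p (th q (th p r)) = th (th p q) r
  P5 : ∀ p q r, th q (th p (th q (th p r))) = th q (th p r)

namespace ProjectionAlgebra

variable {P : Type*} (A : ProjectionAlgebra P)

/-- `p ≤ q` iff `p = pθ_q`. -/
def le (p q : P) : Prop := p = A.th q p

/-- `p ≤F q` iff `p = qθ_p`. -/
def leF (p q : P) : Prop := p = A.th p q

/-- `p F q` iff `p ≤F q` and `q ≤F p`. -/
def Frel (p q : P) : Prop := A.leF p q ∧ A.leF q p

/-- `(e, f)` is a `p`-linked pair: `f = eθ_pθ_f` and `e = fθ_pθ_e`. -/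
def Linked (p e f : P) : Prop :=
  f = A.th f (A.th p e) ∧ e = A.th e (A.th p f)

/-- `q θ_{p₁} ⋯ θ_{p_k}` for the list `ps = [p₁, …, p_k]`. -/
def applyList (q : P) (ps : List P) : P := ps.foldl (fun x p => A.th p x) q

end ProjectionAlgebra

/-- The defining relations of the free projection-generated regular *-semigroup
`PG(P)`: `x_p² = x_p`, `(x_p x_q)² = x_p x_q`, and `x_p x_q x_p = x_{qθ_p}`,
for `p, q ∈ P`, as a binary relation on the free semigroup over `P`. -/
def PGrel {P : Type*} (A : ProjectionAlgebra P) :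
    FreeSemigroup P → FreeSemigroup P → Prop := fun u v =>
  (∃ p : P, u = FreeSemigroup.of p * FreeSemigroup.of p ∧ v = FreeSemigroup.of p) ∨
  (∃ p q : P, u = (FreeSemigroup.of p * FreeSemigroup.of q) *
      (FreeSemigroup.of p * FreeSemigroup.of q) ∧
    v = FreeSemigroup.of p * FreeSemigroup.of q) ∨
  (∃ p q : P, u = FreeSemigroup.of p * FreeSemigroup.of q * FreeSemigroup.of p ∧
    v = FreeSemigroup.of (A.th p q))

/-- The word `x_h x_{t₁} ⋯ x_{t_m}` in the free semigroup. -/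
def word1 {P : Type*} (h : P) (t : List P) : FreeSemigroup P :=
  t.foldl (fun w p => w * FreeSemigroup.of p) (FreeSemigroup.of h)

/-- The reversed word `x_{t_m} ⋯ x_{t₁} x_h` in the free semigroup. -/
def word1r {P : Type*} (h : P) (t : List P) : FreeSemigroup P :=
  t.foldl (fun w p => FreeSemigroup.of p * w) (FreeSemigroup.of h)

namespace Con

variable {M N : Type*} [Mul M] [Mul N] {c : Con M}

def liftMulHom (f : M →ₙ* N) (H : c ≤ ker f) : c.Quotient →ₙ* N where
  toFun x := Con.liftOn x f fun _ _ h => H h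
  map_mul' x y := Con.induction_on₂ x y fun a b => map_mul f a b

theorem mulHom_ext {f g : c.Quotient →ₙ* N} (h : f.comp c.mkMulHom = g.comp c.mkMulHom) :
    f = g :=
  DFunLike.ext _ _ fun x => Con.induction_on x fun a => DFunLike.congr_fun h a

end Con

theorem IsStarProjection.mul_mul_self_of_regular {S : Type*} [Semigroup S] [StarMul S]
    (hreg : ∀ a : S, a * star a * a = a) {e f : S} (he : IsStarProjection e)
    (hf : IsStarProjection f) : e * f * (e * f) = e * f :=
  calc e * f * (e * f) = e * (f * f) * ((e * e) * f) := by
        rw [he.isIdempotentElem.eq, hf.isIdempotentElem.eq]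
    _ = e * f * star (e * f) * (e * f) := by
        rw [star_mul, hf.isSelfAdjoint.star_eq, he.isSelfAdjoint.star_eq]
        simp only [mul_assoc]
    _ = e * f := hreg _

theorem conGen_PGrel_le_ker_lift {P S : Type*} (A : ProjectionAlgebra P) [Semigroup S]
    [StarMul S] (hreg : ∀ a : S, a * star a * a = a) (φ : P → S)
    (hproj : ∀ p, IsStarProjection (φ p)) (hmor : ∀ p q : P, φ (A.th p q) = φ p * φ q * φ p) :
    conGen (PGrel A) ≤ Con.ker (FreeSemigroup.lift φ) := by
  refine Con.conGen_le.mpr ?_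
  rintro u v (⟨p, rfl, rfl⟩ | ⟨p, q, rfl, rfl⟩ | ⟨p, q, rfl, rfl⟩) <;>
    simp only [Con.ker_rel, map_mul, FreeSemigroup.lift_of]
  · exact (hproj p).isIdempotentElem.eq
  · exact (hproj p).mul_mul_self_of_regular hreg (hproj q)
  · exact (hmor p q).symm

theorem word1_append_singleton {P : Type*} (h p : P) (t : List P) :
    word1 h (t ++ [p]) = word1 h t * FreeSemigroup.of p := by
  simp only [word1, List.foldl_append, List.foldl_cons, List.foldl_nil]

theorem word1r_append_singleton {P : Type*} (h p : P) (t : List P) :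
    word1r h (t ++ [p]) = FreeSemigroup.of p * word1r h t := by
  simp only [word1r, List.foldl_append, List.foldl_cons, List.foldl_nil]

theorem map_word1r_eq_star_map_word1 {P S : Type*} [Semigroup S] [StarMul S]
    (f : FreeSemigroup P →ₙ* S) (hf : ∀ p, star (f (FreeSemigroup.of p)) = f (FreeSemigroup.of p))
    (h : P) (t : List P) : f (word1r h t) = star (f (word1 h t)) := by
  induction t using List.reverseRecOn with
  | nil => exact (hf h).symm
  | append_singleton t p ih =>
    rw [word1_append_singleton, word1r_append_singleton, map_mul, map_mul, star_mul, ih, hf]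

/-- Let `T = X_P⁺/∼` be the quotient of the free semigroup on `X_P` by
the congruence generated by `x_p² = x_p`, `(x_p x_q)² = x_p x_q`,
`x_p x_q x_p = x_{qθ_p}`.  Let `S` be a regular *-semigroup, and `φ : P → P(S)` a
projection algebra morphism (so each `φ p` is a projection of `S`, and
`φ(qθ_p) = φ(p) φ(q) φ(p)`).  Then there is a unique semigroup homomorphism
`Φ : T → S` with `Φ([x_p]) = φ(p)` for all `p`; moreover `Φ` respects the involutions:
`Φ([x_{p_k}⋯x_{p₁}]) = (Φ([x_{p₁}⋯x_{p_k}]))*` for every word. -/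
theorem stmt15 {P : Type*} (A : ProjectionAlgebra P)
    {S : Type*} [Semigroup S] [StarMul S]
    (hreg : ∀ a : S, a * star a * a = a)
    (φ : P → S)
    (hproj : ∀ p : P, φ p * φ p = φ p ∧ star (φ p) = φ p)
    (hmor : ∀ p q : P, φ (A.th p q) = φ p * φ q * φ p) :
    (∃! Φ : (conGen (PGrel A)).Quotient →ₙ* S,
      ∀ p : P, Φ ↑(FreeSemigroup.of p) = φ p) ∧
    (∀ Φ : (conGen (PGrel A)).Quotient →ₙ* S,
      (∀ p : P, Φ ↑(FreeSemigroup.of p) = φ p) →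
      ∀ (h : P) (t : List P), Φ ↑(word1r h t) = star (Φ ↑(word1 h t))) := by
  have hproj' : ∀ p, IsStarProjection (φ p) := fun p => isStarProjection_iff'.mpr (hproj p)
  let Φ₀ := Con.liftMulHom (FreeSemigroup.lift φ) (conGen_PGrel_le_ker_lift A hreg φ hproj' hmor)
  refine ⟨⟨Φ₀, fun p => rfl, fun Φ hΦ => ?_⟩, fun Φ hΦ h t => ?_⟩
  · exact Con.mulHom_ext (FreeSemigroup.hom_ext (funext hΦ))
  · exact map_word1r_eq_star_map_word1 (Φ.comp (Con.mkMulHom _))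
      (fun p => by simp only [MulHom.comp_apply, Con.mkMulHom_apply, hΦ, (hproj p).2]) h t
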